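/- arXiv:2412.07999 — 3 statements merged into one kernel-verified Lean document; each statement's English description precedes it below -/
import Mathlib

section
/- For all real x, the function q(x) = φ(x)²/Φ(x)² + x·φ(x)/Φ(x), where φ and Φ are the standard Gaussian pdf and cdf, satisfies 0 < q(x) < 1. -/
/-!
Multiplying by `Φ²`, the bound `0 < q` becomes `0 < φ + x Φ = ∫_{-∞}^x (x - t) φ(t) dt`, and `q < 1`
becomes `0 < F := Φ² - φ² - x φ Φ`. Both `F` and `H := Φ + x φ / (1 + x²)` tend to `0` at `-∞`,
and (using `φ' = -x φ`) `H' = 2 φ / (1 + x²)² > 0` while `F' = φ (1 + x²) H`, so `H > 0` and then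
`F > 0`.
-/

/-- standard normal pdf -/
noncomputable def gaussPdf (x : ℝ) : ℝ :=
  (Real.sqrt (2 * Real.pi))⁻¹ * Real.exp (-x ^ 2 / 2)

/-- standard normal cdf -/
noncomputable def gaussCdf (x : ℝ) : ℝ := ∫ t in Set.Iic x, gaussPdf t

/-- negative derivative of the inverse Mills ratio -/
noncomputable def millsQ (x : ℝ) : ℝ :=
  gaussPdf x ^ 2 / gaussCdf x ^ 2 + x * gaussPdf x / gaussCdf x

open MeasureTheory Set Filter Real Topology

lemma pos_of_hasDerivAt_pos_of_tendsto_atBot {f f' : ℝ → ℝ} (hf : ∀ x, HasDerivAt f (f' x) x)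
    (hf' : ∀ x, 0 < f' x) (hlim : Tendsto f atBot (𝓝 0)) (x : ℝ) : 0 < f x := by
  have hmono := strictMono_of_hasDerivAt_pos hf hf'
  exact (hmono.monotone.le_of_tendsto hlim (x - 1)).trans_lt (hmono (sub_one_lt x))

lemma integral_Iic_pos_of_pos {f : ℝ → ℝ} {x : ℝ} (hf : IntegrableOn f (Iic x))
    (hpos : ∀ t < x, 0 < f t) : 0 < ∫ t in Iic x, f t := by
  rw [integral_Iic_eq_integral_Iio,
    setIntegral_pos_iff_support_of_nonneg_ae ?_ (hf.mono_set Iio_subset_Iic_self)]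
  · have hsub : Iio x ⊆ Function.support f ∩ Iio x := fun t ht => ⟨(hpos t ht).ne', ht⟩
    exact (by simp : 0 < volume (Iio x)).trans_le (measure_mono hsub)
  · filter_upwards [self_mem_ae_restrict measurableSet_Iio] with t ht using (hpos t ht).le

lemma tendsto_one_add_sq_atBot : Tendsto (fun x : ℝ => 1 + x ^ 2) atBot atTop := by
  refine tendsto_atTop_add_const_left _ 1 ?_
  exact ((tendsto_pow_atTop two_ne_zero).comp tendsto_neg_atBot_atTop).congr fun x => neg_sq x

lemma gaussPdf_eq : gaussPdf = fun x => (√(2 * π))⁻¹ * rexp (-(1 / 2) * x ^ 2) := by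
  ext x
  rw [gaussPdf]
  congr 2
  ring

lemma gaussPdf_pos (x : ℝ) : 0 < gaussPdf x := by
  rw [gaussPdf]
  positivity

lemma continuous_gaussPdf : Continuous gaussPdf := by
  rw [gaussPdf_eq]
  fun_prop

lemma hasDerivAt_gaussPdf (x : ℝ) : HasDerivAt gaussPdf (-x * gaussPdf x) x := by
  have h := (((hasDerivAt_pow 2 x).const_mul (-(1 / 2) : ℝ)).exp).const_mul (√(2 * π))⁻¹
  rw [gaussPdf_eq]
  exact h.congr_deriv (by push_cast; ring)

lemma integrable_gaussPdf : Integrable gaussPdf := by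
  rw [gaussPdf_eq]
  exact (integrable_exp_neg_mul_sq (by norm_num)).const_mul _

lemma integrable_mul_gaussPdf : Integrable fun t => t * gaussPdf t := by
  simp only [gaussPdf_eq, mul_left_comm _ (√(2 * π))⁻¹]
  exact (integrable_mul_exp_neg_mul_sq (by norm_num)).const_mul _

lemma tendsto_abs_rpow_mul_gaussPdf_atBot (s : ℝ) :
    Tendsto (fun x => |x| ^ s * gaussPdf x) atBot (𝓝 0) := by
  have h := ((tendsto_rpow_abs_mul_exp_neg_mul_sq_cocompact (a := 1 / 2) (by norm_num) s).mono_left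
    atBot_le_cocompact).const_mul (√(2 * π))⁻¹
  rw [mul_zero] at h
  simp only [gaussPdf_eq, mul_left_comm _ (√(2 * π))⁻¹]
  exact h

lemma tendsto_gaussPdf_atBot : Tendsto gaussPdf atBot (𝓝 0) := by
  simpa using tendsto_abs_rpow_mul_gaussPdf_atBot 0

lemma tendsto_mul_gaussPdf_atBot : Tendsto (fun x => x * gaussPdf x) atBot (𝓝 0) := by
  rw [tendsto_zero_iff_abs_tendsto_zero]
  refine (tendsto_abs_rpow_mul_gaussPdf_atBot 1).congr fun x => ?_
  simp [abs_mul, abs_of_pos (gaussPdf_pos x)]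

lemma integral_Iic_mul_gaussPdf (x : ℝ) : ∫ t in Iic x, t * gaussPdf t = -gaussPdf x := by
  have hderiv (t : ℝ) : HasDerivAt (fun t => -gaussPdf t) (t * gaussPdf t) t :=
    (hasDerivAt_gaussPdf t).neg.congr_deriv (by ring)
  rw [integral_Iic_of_hasDerivAt_of_tendsto' (fun t _ => hderiv t)
    integrable_mul_gaussPdf.integrableOn (by simpa using tendsto_gaussPdf_atBot.neg), sub_zero]

lemma hasDerivAt_gaussCdf (x : ℝ) : HasDerivAt gaussCdf (gaussPdf x) x := by
  have hsplit : gaussCdf = fun u => gaussCdf 0 + ∫ t in (0 : ℝ)..u, gaussPdf t := by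
    ext u
    rw [← intervalIntegral.integral_Iic_sub_Iic integrable_gaussPdf.integrableOn
      integrable_gaussPdf.integrableOn, gaussCdf, gaussCdf]
    ring
  rw [hsplit]
  exact (intervalIntegral.integral_hasDerivAt_right integrable_gaussPdf.intervalIntegrable
    (continuous_gaussPdf.stronglyMeasurableAtFilter _ _)
    continuous_gaussPdf.continuousAt).const_add _

lemma gaussCdf_pos (x : ℝ) : 0 < gaussCdf x :=
  integral_Iic_pos_of_pos integrable_gaussPdf.integrableOn fun t _ => gaussPdf_pos t

lemma gaussPdf_add_mul_gaussCdf_pos (x : ℝ) : 0 < gaussPdf x + x * gaussCdf x := by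
  have hint : IntegrableOn (fun t => x * gaussPdf t - t * gaussPdf t) (Iic x) :=
    (integrable_gaussPdf.const_mul x).integrableOn.sub integrable_mul_gaussPdf.integrableOn
  have hrepr : gaussPdf x + x * gaussCdf x = ∫ t in Iic x, (x * gaussPdf t - t * gaussPdf t) := by
    rw [integral_sub (integrable_gaussPdf.const_mul x).integrableOn
      integrable_mul_gaussPdf.integrableOn, integral_const_mul, integral_Iic_mul_gaussPdf, gaussCdf]
    ring
  rw [hrepr]
  refine integral_Iic_pos_of_pos hint fun t ht => ?_
  nlinarith [gaussPdf_pos t]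

lemma tendsto_gaussCdf_atBot : Tendsto gaussCdf atBot (𝓝 0) := by
  have hupper : Tendsto (fun x => -gaussPdf x / x) atBot (𝓝 0) :=
    tendsto_gaussPdf_atBot.neg.div_atBot tendsto_id |>.congr' (by simp)
  refine tendsto_of_tendsto_of_tendsto_of_le_of_le' tendsto_const_nhds hupper
    (Eventually.of_forall fun x => (gaussCdf_pos x).le) ?_
  filter_upwards [eventually_lt_atBot 0] with x hx
  rw [le_div_iff_of_neg hx]
  linarith [gaussPdf_add_mul_gaussCdf_pos x]

lemma one_add_sq_mul_gaussCdf_add_mul_gaussPdf_pos (x : ℝ) :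
    0 < (1 + x ^ 2) * gaussCdf x + x * gaussPdf x := by
  have hderiv (t : ℝ) : HasDerivAt (fun t => gaussCdf t + t * gaussPdf t / (1 + t ^ 2))
      (2 * gaussPdf t / (1 + t ^ 2) ^ 2) t := by
    have h := (hasDerivAt_gaussCdf t).add
      (((hasDerivAt_id t).mul (hasDerivAt_gaussPdf t)).div
        ((hasDerivAt_pow 2 t).const_add 1) (by positivity))
    refine h.congr_deriv ?_
    simp only [id, Pi.mul_apply]
    field_simp
    ring
  have hlim : Tendsto (fun t => gaussCdf t + t * gaussPdf t / (1 + t ^ 2)) atBot (𝓝 0) := by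
    simpa using tendsto_gaussCdf_atBot.add
      (tendsto_mul_gaussPdf_atBot.div_atTop tendsto_one_add_sq_atBot)
  have hpos := pos_of_hasDerivAt_pos_of_tendsto_atBot hderiv
    (fun t => by have := gaussPdf_pos t; positivity) hlim x
  have hx : (0 : ℝ) < 1 + x ^ 2 := by positivity
  calc (0 : ℝ) < (1 + x ^ 2) * (gaussCdf x + x * gaussPdf x / (1 + x ^ 2)) := mul_pos hx hpos
    _ = (1 + x ^ 2) * gaussCdf x + x * gaussPdf x := by rw [mul_add, mul_div_cancel₀ _ hx.ne']

lemma gaussCdf_sq_sub_gaussPdf_sq_sub_pos (x : ℝ) :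
    0 < gaussCdf x ^ 2 - gaussPdf x ^ 2 - x * gaussPdf x * gaussCdf x := by
  have hderiv (t : ℝ) :
      HasDerivAt (fun t => gaussCdf t ^ 2 - gaussPdf t ^ 2 - t * gaussPdf t * gaussCdf t)
        (gaussPdf t * ((1 + t ^ 2) * gaussCdf t + t * gaussPdf t)) t := by
    have h := (((hasDerivAt_gaussCdf t).pow 2).sub ((hasDerivAt_gaussPdf t).pow 2)).sub
      (((hasDerivAt_id t).mul (hasDerivAt_gaussPdf t)).mul (hasDerivAt_gaussCdf t))
    refine h.congr_deriv ?_
    simp only [id, Pi.mul_apply]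
    push_cast
    ring
  have hlim : Tendsto (fun t => gaussCdf t ^ 2 - gaussPdf t ^ 2 - t * gaussPdf t * gaussCdf t)
      atBot (𝓝 0) := by
    simpa using ((tendsto_gaussCdf_atBot.pow 2).sub (tendsto_gaussPdf_atBot.pow 2)).sub
      (tendsto_mul_gaussPdf_atBot.mul tendsto_gaussCdf_atBot)
  exact pos_of_hasDerivAt_pos_of_tendsto_atBot hderiv
    (fun t => mul_pos (gaussPdf_pos t) (one_add_sq_mul_gaussCdf_add_mul_gaussPdf_pos t)) hlim x

theorem stmt0 : ∀ x : ℝ, 0 < millsQ x ∧ millsQ x < 1 := by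
  intro x
  have hΦ := gaussCdf_pos x
  have hq : millsQ x = gaussPdf x * (gaussPdf x + x * gaussCdf x) / gaussCdf x ^ 2 := by
    rw [millsQ]
    field_simp
  rw [hq, div_lt_one (by positivity)]
  constructor
  · have hφ := gaussPdf_pos x
    have hmills := gaussPdf_add_mul_gaussCdf_pos x
    positivity
  · linarith [gaussCdf_sq_sub_gaussPdf_sq_sub_pos x]
end

section
/- The function (φ, ρ) ↦ −(n + 2α − 2)·log ρ + (1/2)‖ρy − Xφ‖₂² + λ‖φ‖₁ + ξρ² is convex on ℝ^d × (0,∞) whenever n ≥ 2 − 2α, λ ≥ 0, ξ ≥ 0; hence the transformed LassoDA target π_T(φ,ρ) ∝ ρ^{n+2α−2}·exp(−(1/2)‖ρy − Xφ‖₂² − λ‖φ‖₁ − ξρ²) is log-concave. -/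
/-!
Each residual `ρ yᵢ − (Xφ)ᵢ` is a linear form in `(φ, ρ)` jointly, so the potential is a
combination with nonnegative coefficients `n + 2α − 2`, `1/2`, `λ`, `ξ` of convex functions:
`−log ρ`, squares of linear forms, absolute values of coordinates, and `ρ²`.
-/

open Matrix Set

theorem ConvexOn.fun_sum {𝕜 E β ι : Type*} [Semiring 𝕜] [PartialOrder 𝕜] [AddCommMonoid E]
    [AddCommMonoid β] [PartialOrder β] [IsOrderedAddMonoid β] [SMul 𝕜 E] [Module 𝕜 β]
    {t : Finset ι} {s : Set E} {f : ι → E → β} (hs : Convex 𝕜 s)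
    (hf : ∀ i ∈ t, ConvexOn 𝕜 s (f i)) : ConvexOn 𝕜 s (fun x => ∑ i ∈ t, f i x) := by
  simpa only [← Finset.sum_apply] using
    Finset.sum_induction f (ConvexOn 𝕜 s) (fun _ _ => ConvexOn.add) (convexOn_const 0 hs) hf

section

variable {E : Type*} [AddCommMonoid E] [Module ℝ E]

theorem convexOn_sq_comp_linearMap (L : E →ₗ[ℝ] ℝ) : ConvexOn ℝ univ (fun x => L x ^ 2) :=
  (Even.convexOn_pow (𝕜 := ℝ) even_two (n := 2)).comp_linearMap L

theorem convexOn_abs_comp_linearMap (L : E →ₗ[ℝ] ℝ) : ConvexOn ℝ univ (fun x => |L x|) :=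
  (convexOn_univ_norm (E := ℝ)).comp_linearMap L

theorem convexOn_neg_mul_log_comp_linearMap {c : ℝ} (hc : 0 ≤ c) (L : E →ₗ[ℝ] ℝ) :
    ConvexOn ℝ (L ⁻¹' Ioi 0) (fun x => -(c * Real.log (L x))) := by
  simpa [Function.comp_def] using
    (strictConcaveOn_log_Ioi.concaveOn.neg.smul hc).comp_linearMap L

end

/-- The negative log-density of the transformed LassoDA target is jointly convex on
`ℝ^d × (0,∞)` when `n ≥ 2 − 2α`, `λ ≥ 0`, `ξ ≥ 0`; hence the transformed target
`π_T(φ,ρ) ∝ ρ^{n+2α−2}·exp(−(1/2)‖ρy − Xφ‖² − λ‖φ‖₁ − ξρ²)` is log-concave. -/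
theorem stmt13 {n d : ℕ} (y : Fin n → ℝ) (X : Matrix (Fin n) (Fin d) ℝ)
    (α lam ξ : ℝ) (hn : (n : ℝ) ≥ 2 - 2 * α) (hlam : 0 ≤ lam) (hξ : 0 ≤ ξ) :
    ConvexOn ℝ {p : (Fin d → ℝ) × ℝ | 0 < p.2}
      (fun p =>
        -(((n : ℝ) + 2 * α - 2) * Real.log p.2)
          + (1 / 2) * (∑ i, (p.2 * y i - X.mulVec p.1 i) ^ 2)
          + lam * (∑ j, |p.1 j|) + ξ * p.2 ^ 2) := by
  set S : Set ((Fin d → ℝ) × ℝ) := {p | 0 < p.2}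
  let φ := LinearMap.fst ℝ (Fin d → ℝ) ℝ
  let ρ := LinearMap.snd ℝ (Fin d → ℝ) ℝ
  have hS : Convex ℝ S := (convex_Ioi 0).linear_preimage ρ
  have hlog : ConvexOn ℝ S (fun p => -(((n : ℝ) + 2 * α - 2) * Real.log p.2)) :=
    convexOn_neg_mul_log_comp_linearMap (by linarith) ρ
  have hresidual (i : Fin n) : ConvexOn ℝ S (fun p => (p.2 * y i - X.mulVec p.1 i) ^ 2) := by
    let residual := y i • ρ - LinearMap.proj i ∘ₗ X.mulVecLin ∘ₗ φ
    have h_residual (p : (Fin d → ℝ) × ℝ) : residual p = p.2 * y i - X.mulVec p.1 i := by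
      simp [residual, φ, ρ, mul_comm]
    simpa only [h_residual] using (convexOn_sq_comp_linearMap residual).subset (subset_univ S) hS
  have habs (j : Fin d) : ConvexOn ℝ S (fun p => |p.1 j|) :=
    (convexOn_abs_comp_linearMap (LinearMap.proj j ∘ₗ φ)).subset (subset_univ S) hS
  have hsq : ConvexOn ℝ S (fun p => p.2 ^ 2) :=
    (convexOn_sq_comp_linearMap ρ).subset (subset_univ S) hS
  exact ((hlog.add ((ConvexOn.fun_sum hS fun i _ => hresidual i).smul (by norm_num))).add
    ((ConvexOn.fun_sum hS fun j _ => habs j).smul hlam)).add (hsq.smul hξ)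
end

section
/- Let π be a probability measure on ℝ^d satisfying the Cheeger isoperimetric inequality π⁺(A) ≥ (1/C)·min{π(A), π(Aᶜ)} for all measurable A. Then for any measurable partition ℝ^d = S₁ ⊔ S₂ ⊔ S₃ with r = d(S₁,S₂) = inf{‖x−y‖₂ : x ∈ S₁, y ∈ S₂}, one has π(S₃) ≥ (r/C)·min{π(S₁), π(S₂)}. -/
open MeasureTheory ENNReal

/-- Minkowski content (boundary measure) `π⁺(A)`, using the closed `ε`-enlargement
`A^ε = {x : ∃ y ∈ A, dist x y ≤ ε}` (Mathlib's `Metric.cthickening`). -/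
noncomputable def minkContent {E : Type*} [MeasurableSpace E] [PseudoMetricSpace E]
    (π : Measure E) (A : Set E) : ℝ≥0∞ :=
  Filter.liminf (fun ε : ℝ => (π (Metric.cthickening ε A) - π A) / ENNReal.ofReal ε)
    (nhdsWithin 0 (Set.Ioi 0))

/-- Growth lemma from a lower bound on the right lower Dini derivative, for a
monotone function. -/
lemma dini_growth (G : ℝ → ℝ) (hG : Monotone G) (b c : ℝ) (hb : 0 ≤ b) (hc : 0 ≤ c)
    (hD : ∀ t ∈ Set.Ico (0:ℝ) b, ∀ c' ∈ Set.Ioo (0:ℝ) c,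
        ∀ᶠ ε in nhdsWithin 0 (Set.Ioi 0), c' * ε ≤ G (t + ε) - G t) :
    c * b ≤ G b - G 0 := by
  rcases eq_or_lt_of_le hc with hc0 | hcpos
  · simpa [← hc0] using sub_nonneg.2 (hG hb)
  -- it suffices to prove the bound for every `c' ∈ (0, c)`
  have key : ∀ c' ∈ Set.Ioo (0:ℝ) c, c' * b ≤ G b - G 0 := by
    intro c' hc'
    set E : Set ℝ := {t | t ∈ Set.Icc 0 b ∧ c' * t ≤ G t - G 0} with hE
    have h0E : (0:ℝ) ∈ E := ⟨⟨le_refl _, hb⟩, by simp⟩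
    have hbdd : BddAbove E := ⟨b, fun t ht => ht.1.2⟩
    set T := sSup E with hT
    have hT0 : 0 ≤ T := le_csSup hbdd h0E
    have hTb : T ≤ b := csSup_le ⟨0, h0E⟩ fun t ht => ht.1.2
    have hTE : c' * T ≤ G T - G 0 := by
      rw [mul_comm, ← le_div_iff₀ hc'.1]
      refine csSup_le ⟨0, h0E⟩ fun t ht => ?_
      rw [le_div_iff₀ hc'.1, mul_comm]
      exact ht.2.trans (by linarith [hG (le_csSup hbdd ht : t ≤ T)])
    rcases eq_or_lt_of_le hTb with hTeq | hTlt
    · simpa [hTeq] using hTE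
    · exfalso
      have hev := hD T ⟨hT0, hTlt⟩ c' hc'
      have hmem : Set.Ioo (0:ℝ) (b - T) ∈ nhdsWithin 0 (Set.Ioi 0) :=
        Ioo_mem_nhdsGT_of_mem ⟨le_refl _, by linarith⟩
      obtain ⟨ε, h1, h2⟩ := (hev.and (Filter.eventually_of_mem hmem fun x hx => hx)).exists
      have hTε : T + ε ∈ E := by
        refine ⟨⟨by linarith [h2.1], by linarith [h2.2]⟩, ?_⟩
        have := hTE
        nlinarith [h1]
      have := le_csSup hbdd hTε
      linarith [h2.1]
  rcases eq_or_lt_of_le hb with hb0 | hbpos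
  · simpa [← hb0] using sub_nonneg.2 (hG hb)
  -- pass to the limit `c' → c`
  have hlim : Filter.Tendsto (fun c' : ℝ => c' * b) (nhdsWithin c (Set.Iio c)) (nhds (c * b)) :=
    ((continuous_id.mul continuous_const).tendsto c).mono_left nhdsWithin_le_nhds
  refine le_of_tendsto hlim ?_
  filter_upwards [Ioo_mem_nhdsLT_of_mem (⟨hcpos, le_refl _⟩ : c ∈ Set.Ioc 0 c)] with c' hc'
  exact key c' hc'

/-- Integrated form of the Cheeger isoperimetric inequality: for any measurable partition
`ℝ^d = S₁ ⊔ S₂ ⊔ S₃` with `r ≤ d(S₁,S₂)`, one has `π(S₃) ≥ (r/C)·min{π(S₁),π(S₂)}`. -/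
theorem stmt16 {d : ℕ} (π : Measure (EuclideanSpace ℝ (Fin d))) [IsProbabilityMeasure π]
    (C : ℝ) (hC : 0 < C)
    (hiso : ∀ A : Set (EuclideanSpace ℝ (Fin d)), MeasurableSet A →
      min (π A) (π Aᶜ) / ENNReal.ofReal C ≤ minkContent π A)
    (S₁ S₂ S₃ : Set (EuclideanSpace ℝ (Fin d)))
    (h₁ : MeasurableSet S₁) (h₂ : MeasurableSet S₂) (h₃ : MeasurableSet S₃)
    (hd₁₂ : Disjoint S₁ S₂) (hd₁₃ : Disjoint S₁ S₃) (hd₂₃ : Disjoint S₂ S₃)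
    (hcover : S₁ ∪ S₂ ∪ S₃ = Set.univ)
    (r : ℝ) (hr0 : 0 ≤ r) (hr : ∀ x ∈ S₁, ∀ y ∈ S₂, r ≤ dist x y) :
    ENNReal.ofReal (r / C) * min (π S₁) (π S₂) ≤ π S₃ := by
  set m := min (π S₁) (π S₂) with hm
  have hmfin : m ≠ ∞ := (lt_of_le_of_lt (min_le_left _ _) (measure_lt_top π S₁)).ne
  set g : ℝ → ℝ≥0∞ := fun t => π (Metric.cthickening t S₁) with hg
  have hgfin : ∀ t, g t ≠ ∞ := fun t => measure_ne_top π _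
  have hgmono : Monotone g := fun s t hst =>
    measure_mono (Metric.cthickening_mono hst S₁)
  set G : ℝ → ℝ := fun t => (g t).toReal with hG
  have hGmono : Monotone G := fun s t hst =>
    ENNReal.toReal_mono (hgfin t) (hgmono hst)
  -- distance from `S₂` to `S₁` is at least `r`
  have hinf : ∀ x ∈ S₂, ENNReal.ofReal r ≤ EMetric.infEdist x S₁ := by
    intro x hx
    refine EMetric.le_infEdist.2 fun y hy => ?_
    rw [edist_dist, dist_comm]
    exact ENNReal.ofReal_le_ofReal (hr y hy x hx)
  set c : ℝ := (m / ENNReal.ofReal C).toReal with hc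
  have hCne : ENNReal.ofReal C ≠ 0 := by simp [hC.le, hC]
  have hLfin : m / ENNReal.ofReal C ≠ ∞ := by
    exact (ENNReal.div_lt_top hmfin hCne).ne
  have hc0 : 0 ≤ c := ENNReal.toReal_nonneg
  -- Dini derivative lower bound
  have hD : ∀ t ∈ Set.Ico (0:ℝ) r, ∀ c' ∈ Set.Ioo (0:ℝ) c,
      ∀ᶠ ε in nhdsWithin 0 (Set.Ioi 0), c' * ε ≤ G (t + ε) - G t := by
    intro t ht c' hc'
    set A := Metric.cthickening t S₁ with hA
    have hAmeas : MeasurableSet A := Metric.isClosed_cthickening.measurableSet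
    have hS₁A : π S₁ ≤ π A := measure_mono (Metric.self_subset_cthickening S₁)
    have hS₂A : π S₂ ≤ π Aᶜ := by
      refine measure_mono fun x hx => ?_
      intro hxA
      have h1 : EMetric.infEdist x S₁ ≤ ENNReal.ofReal t := hxA
      have h2 := hinf x hx
      have : ENNReal.ofReal r ≤ ENNReal.ofReal t := h2.trans h1
      rw [ENNReal.ofReal_le_ofReal_iff ht.1] at this
      linarith [ht.2]
    have hmin : m ≤ min (π A) (π Aᶜ) :=
      le_min ((min_le_left _ _).trans hS₁A) ((min_le_right _ _).trans hS₂A)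
    have hL1 : m / ENNReal.ofReal C ≤ minkContent π A :=
      le_trans (ENNReal.div_le_div_right hmin _) (hiso A hAmeas)
    -- compare the `A`-quotient with the `g`-quotient
    have hquot : ∀ ε : ℝ, 0 ≤ ε →
        (π (Metric.cthickening ε A) - π A) / ENNReal.ofReal ε ≤
          (g (t + ε) - g t) / ENNReal.ofReal ε := by
      intro ε hε
      refine ENNReal.div_le_div_right (tsub_le_tsub ?_ le_rfl) _
      refine measure_mono ?_
      have := Metric.cthickening_cthickening_subset hε ht.1 S₁
      rw [add_comm t ε]
      exact this
    have hL2 : m / ENNReal.ofReal C ≤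
        Filter.liminf (fun ε : ℝ => (g (t + ε) - g t) / ENNReal.ofReal ε)
          (nhdsWithin 0 (Set.Ioi 0)) := by
      refine hL1.trans (Filter.liminf_le_liminf ?_)
      filter_upwards [self_mem_nhdsWithin] with ε hε
      exact hquot ε (le_of_lt hε)
    have hc'lt : ENNReal.ofReal c' < m / ENNReal.ofReal C := by
      rw [← ENNReal.ofReal_toReal hLfin]
      exact ENNReal.ofReal_lt_ofReal_iff_of_nonneg hc'.1.le |>.2 hc'.2
    have hev := Filter.eventually_lt_of_lt_liminf (lt_of_lt_of_le hc'lt hL2)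
    filter_upwards [hev, self_mem_nhdsWithin] with ε hε hεpos
    -- convert the `ℝ≥0∞` inequality to a real one
    have hεpos' : (0:ℝ) < ε := hεpos
    have h1 : ENNReal.ofReal c' * ENNReal.ofReal ε ≤ g (t + ε) - g t := by
      rw [← ENNReal.le_div_iff_mul_le (Or.inl (by simp [hεpos'])) (Or.inl (by simp))]
      exact hε.le
    rw [← ENNReal.ofReal_mul hc'.1.le] at h1
    have h2 : g t ≤ g (t + ε) := hgmono (by linarith)
    have h3 := ENNReal.toReal_mono (by
      exact (tsub_le_self.trans_lt (lt_of_le_of_ne le_top (hgfin (t+ε)))).ne) h1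
    rw [ENNReal.toReal_ofReal (mul_nonneg hc'.1.le hεpos'.le), ENNReal.toReal_sub_of_le h2 (hgfin (t+ε))] at h3
    exact h3
  -- growth of `G` up to any `b < r`
  have hgrow : ∀ b ∈ Set.Ico (0:ℝ) r, c * b ≤ (π S₃).toReal := by
    intro b hb
    have := dini_growth G hGmono b c hb.1 hc0
      (fun t ht => hD t ⟨ht.1, ht.2.trans hb.2⟩)
    refine this.trans ?_
    -- `G b - G 0 ≤ π S₃`
    have hsub : Metric.cthickening b S₁ ⊆ S₁ ∪ S₃ := by
      intro x hx
      have hx2 : x ∉ S₂ := by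
        intro hxS₂
        have h1 : EMetric.infEdist x S₁ ≤ ENNReal.ofReal b := hx
        have h2 := (hinf x hxS₂).trans h1
        rw [ENNReal.ofReal_le_ofReal_iff hb.1] at h2
        linarith [hb.2]
      have : x ∈ S₁ ∪ S₂ ∪ S₃ := hcover ▸ Set.mem_univ x
      rcases this with (h | h) | h
      · exact Or.inl h
      · exact absurd h hx2
      · exact Or.inr h
    have h4 : g b ≤ π S₁ + π S₃ := by
      refine (measure_mono hsub).trans ?_
      rw [measure_union hd₁₃ h₃]
    have h5 : (π S₁).toReal ≤ G 0 :=
      ENNReal.toReal_mono (hgfin 0) (measure_mono (Metric.self_subset_cthickening S₁))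
    have h6 : G b ≤ (π S₁).toReal + (π S₃).toReal := by
      have := ENNReal.toReal_mono (by
        exact (ENNReal.add_lt_top.2 ⟨measure_lt_top _ _, measure_lt_top _ _⟩).ne) h4
      rwa [ENNReal.toReal_add (measure_ne_top _ _) (measure_ne_top _ _)] at this
    linarith
  -- pass to the limit `b → r`
  have hfin : c * r ≤ (π S₃).toReal := by
    rcases eq_or_lt_of_le hr0 with hr0' | hrpos
    · simpa [← hr0'] using ENNReal.toReal_nonneg
    · have hlim : Filter.Tendsto (fun b : ℝ => c * b) (nhdsWithin r (Set.Iio r))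
          (nhds (c * r)) :=
        ((continuous_const.mul continuous_id).tendsto r).mono_left nhdsWithin_le_nhds
      refine le_of_tendsto hlim ?_
      filter_upwards [Ioo_mem_nhdsLT_of_mem (⟨hrpos, le_refl _⟩ : r ∈ Set.Ioc 0 r)] with b hb
      exact hgrow b ⟨hb.1.le, hb.2⟩
  -- conclude
  rw [← ENNReal.toReal_le_toReal (by
      exact ENNReal.mul_ne_top ENNReal.ofReal_ne_top hmfin) (measure_ne_top _ _)]
  rw [ENNReal.toReal_mul, ENNReal.toReal_ofReal (by positivity)]
  have hcval : c = m.toReal / C := by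
    rw [hc, ENNReal.toReal_div, ENNReal.toReal_ofReal hC.le]
  calc r / C * m.toReal = c * r := by rw [hcval]; ring
    _ ≤ (π S₃).toReal := hfin
end
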